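/- arXiv:2012.05848 — 2 statements merged into one kernel-verified Lean document; each statement's English description precedes it below -/
import Mathlib

section
/- Let w = (w₀, w₁, w₂) ∈ ℤ³ with w₀ = 4n + 3 and w₁ = n + 1 for some integer n ≥ 0. Suppose w₂ satisfies both w₂ > 2n + 5/2 (as a rational inequality) and 16w₁² − 2w₀w₂ ≥ −2. Then n = 0 and w = (3, 1, 3). -/
/- STATEMENT 8: w₀ = 4n+3, w₁ = n+1 with n ≥ 0; if w₂ > 2n + 5/2 (in ℚ) and
16w₁² - 2w₀w₂ ≥ -2 then n = 0 and w = (3,1,3). -/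

theorem destabilizing_class_is_313
    (n w₀ w₁ w₂ : ℤ) (hn : 0 ≤ n) (h₀ : w₀ = 4 * n + 3) (h₁ : w₁ = n + 1)
    (h₂ : (w₂ : ℚ) > 2 * (n : ℚ) + 5 / 2)
    (h₃ : 16 * w₁ ^ 2 - 2 * w₀ * w₂ ≥ -2) :
    n = 0 ∧ w₀ = 3 ∧ w₁ = 1 ∧ w₂ = 3 := by
  have h2' : 2 * w₂ > 4 * n + 5 := by
    have : ((2 * w₂ : ℤ) : ℚ) > ((4 * n + 5 : ℤ) : ℚ) := by push_cast; linarith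
    exact_mod_cast this
  have hw : w₂ ≥ 2 * n + 3 := by omega
  subst h₀ h₁
  have hn0 : n = 0 := by nlinarith
  subst hn0
  refine ⟨rfl, by ring, by ring, by omega⟩
end

section
/- In ℤ³ with the Mukai pairing ⟨(a,b,c),(a',b',c')⟩ = 16bb' − ac' − ca', consider the sublattice H_W = {(a, b, 3b) : a, b ∈ ℤ}. For v = (2,1,3): (i) every w = (a, b, 3b) ∈ H_W satisfies w² = 16b² − 6ab and ⟨w, v⟩ = 10b − 3a; (ii) there is no isotropic class w ∈ H_W with ⟨w, v⟩ = 1; (iii) there is no isotropic class w ∈ H_W with ⟨w, v⟩ = 2; (iv) there is no spherical class s ∈ H_W (s² = −2) with ⟨s, v⟩ = 0; (v) the class (3,1,3) ∈ H_W is spherical with ⟨(3,1,3), v⟩ = 1. -/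
/- STATEMENT 11: In ℤ³ with Mukai pairing, for H_W = {(a, b, 3b)} and v = (2,1,3):
(i) w² = 16b² - 6ab and ⟨w,v⟩ = 10b - 3a; (ii) no isotropic class with ⟨w,v⟩ = 1;
(iii) no isotropic class with ⟨w,v⟩ = 2; (iv) no spherical class with ⟨s,v⟩ = 0;
(v) (3,1,3) is spherical with ⟨(3,1,3),v⟩ = 1. -/

def mukai (v w : ℤ × ℤ × ℤ) : ℤ :=
  16 * v.2.1 * w.2.1 - v.1 * w.2.2 - v.2.2 * w.1

theorem flopping_wall_lattice_properties :
    (∀ a b : ℤ, mukai (a, b, 3 * b) (a, b, 3 * b) = 16 * b ^ 2 - 6 * a * b ∧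
      mukai (a, b, 3 * b) (2, 1, 3) = 10 * b - 3 * a) ∧
    (¬ ∃ a b : ℤ, mukai (a, b, 3 * b) (a, b, 3 * b) = 0 ∧
      mukai (a, b, 3 * b) (2, 1, 3) = 1) ∧
    (¬ ∃ a b : ℤ, mukai (a, b, 3 * b) (a, b, 3 * b) = 0 ∧
      mukai (a, b, 3 * b) (2, 1, 3) = 2) ∧
    (¬ ∃ a b : ℤ, mukai (a, b, 3 * b) (a, b, 3 * b) = -2 ∧
      mukai (a, b, 3 * b) (2, 1, 3) = 0) ∧
    (mukai (3, 1, 3) (3, 1, 3) = -2 ∧ mukai (3, 1, 3) (2, 1, 3) = 1) := by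
  refine ⟨fun a b => ⟨by simp [mukai]; ring, by simp [mukai]; ring⟩, ?_, ?_, ?_, by norm_num [mukai]⟩
  · rintro ⟨a, b, h1, h2⟩
    simp only [mukai] at h1 h2
    have hb : b = 0 ∨ 2 * b = 1 := by
      rcases mul_eq_zero.mp (show (2 * b) * (1 - 2 * b) = 0 by linear_combination h1 - 2 * b * h2) with h | h
      · left; omega
      · right; omega
    omega
  · rintro ⟨a, b, h1, h2⟩
    simp only [mukai] at h1 h2
    have hb : b = 0 ∨ b = 1 := by
      rcases mul_eq_zero.mp (show (2 * b) * (2 - 2 * b) = 0 by linear_combination h1 - 2 * b * h2) with h | h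
      · left; omega
      · right; omega
    omega
  · rintro ⟨a, b, h1, h2⟩
    simp only [mukai] at h1 h2
    have h3 : 4 * (b * b) = 2 := by linear_combination 2 * b * h2 - h1
    set c := b * b with hc
    omega
end
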